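/- Let g : F_2^{n-1} → F_2, let f(x,ε) = g(x) on F_2^n, and let f_r be obtained from f by changing the value of f on a set E of r points. Then Δ(f_r) ≥ 2^n - 4r. Moreover, NL(f) - r ≤ NL(f_r) ≤ NL(f) + r. -/

import Mathlib

open Finset

/-- Autocorrelation of a Boolean function on `F_2^m × F_2 = F_2^{m+1}`. -/
def acP {m : ℕ} (f : (Fin m → ZMod 2) × ZMod 2 → ZMod 2)
    (u : (Fin m → ZMod 2) × ZMod 2) : ℤ :=
  ∑ x : (Fin m → ZMod 2) × ZMod 2, (-1 : ℤ) ^ ((f x + f (x + u)).val)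

/-- Absolute indicator. -/
def absIndP {m : ℕ} (f : (Fin m → ZMod 2) × ZMod 2 → ZMod 2) : ℕ :=
  Finset.sup (Finset.univ.erase 0) fun u => (acP f u).natAbs

/-- Nonlinearity: minimum Hamming distance to an affine function. -/
noncomputable def nlP {m : ℕ} (h : (Fin m → ZMod 2) × ZMod 2 → ZMod 2) : ℕ :=
  sInf {d | ∃ (ℓ : ((Fin m → ZMod 2) × ZMod 2) →ₗ[ZMod 2] ZMod 2) (c : ZMod 2),
    d = hammingDist h (fun x => ℓ x + c)}

lemma neg_one_pow_bounds (n : ℕ) : (-1 : ℤ) ≤ (-1 : ℤ) ^ n ∧ (-1 : ℤ) ^ n ≤ 1 := by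
  rcases Nat.even_or_odd n with h | h
  · rw [h.neg_one_pow]; exact ⟨by norm_num, le_refl 1⟩
  · rw [h.neg_one_pow]; exact ⟨le_refl _, by norm_num⟩

lemma nlP_mem {m : ℕ} (h : (Fin m → ZMod 2) × ZMod 2 → ZMod 2) :
    nlP h ∈ {d | ∃ (ℓ : ((Fin m → ZMod 2) × ZMod 2) →ₗ[ZMod 2] ZMod 2) (c : ZMod 2),
    d = hammingDist h (fun x => ℓ x + c)} := by
  apply Nat.sInf_mem
  exact ⟨_, 0, 0, rfl⟩

lemma nlP_le {m : ℕ} (h : (Fin m → ZMod 2) × ZMod 2 → ZMod 2)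
    (ℓ : ((Fin m → ZMod 2) × ZMod 2) →ₗ[ZMod 2] ZMod 2) (c : ZMod 2) :
    nlP h ≤ hammingDist h (fun x => ℓ x + c) :=
  Nat.sInf_le ⟨ℓ, c, rfl⟩

lemma nlP_diff {m r : ℕ} (h1 h2 : (Fin m → ZMod 2) × ZMod 2 → ZMod 2)
    (hd : hammingDist h1 h2 ≤ r) : nlP h1 ≤ nlP h2 + r := by
  obtain ⟨ℓ, c, hc⟩ := nlP_mem h2
  calc nlP h1 ≤ hammingDist h1 (fun x => ℓ x + c) := nlP_le h1 ℓ c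
    _ ≤ hammingDist h1 h2 + hammingDist h2 (fun x => ℓ x + c) := hammingDist_triangle _ _ _
    _ ≤ nlP h2 + r := by rw [← hc]; omega

theorem stmt19 (m r : ℕ) (g : (Fin m → ZMod 2) → ZMod 2)
    (f fr : (Fin m → ZMod 2) × ZMod 2 → ZMod 2)
    (hf : ∀ x, f (x, 0) = g x ∧ f (x, 1) = g x)
    (E : Finset ((Fin m → ZMod 2) × ZMod 2)) (hE : E.card = r)
    (h_out : ∀ x ∉ E, fr x = f x) (h_in : ∀ x ∈ E, fr x ≠ f x) :
    (2 ^ (m + 1) : ℤ) - 4 * r ≤ (absIndP fr : ℤ) ∧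
    (nlP f : ℤ) - r ≤ (nlP fr : ℤ) ∧ (nlP fr : ℤ) ≤ (nlP f : ℤ) + r := by
  have hfx : ∀ x : (Fin m → ZMod 2) × ZMod 2, f x = g x.1 := by
    rintro ⟨a, b⟩
    fin_cases b
    · exact (hf a).1
    · exact (hf a).2
  -- the shift u
  set u : (Fin m → ZMod 2) × ZMod 2 := ((0 : Fin m → ZMod 2), (1 : ZMod 2)) with hu
  have h11 : (1 : ZMod 2) + 1 = 0 := by decide
  have huu : u + u = 0 := by
    rw [hu, Prod.mk_add_mk, add_zero, h11]; rfl
  have hune : u ≠ 0 := by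
    rw [hu]
    intro h
    have := congrArg Prod.snd h
    simp at this
  -- f is invariant under shift by u
  have hshift : ∀ x : (Fin m → ZMod 2) × ZMod 2, f (x + u) = f x := by
    intro x
    rw [hfx, hfx]
    congr 1
    show x.1 + 0 = x.1
    rw [add_zero]
  -- cardinality
  have hcard : Fintype.card ((Fin m → ZMod 2) × ZMod 2) = 2 ^ (m + 1) := by
    simp [Fintype.card_prod, pow_succ]
  -- part 1
  have part1 : (2 ^ (m + 1) : ℤ) - 4 * r ≤ (absIndP fr : ℤ) := by
    set B : Finset ((Fin m → ZMod 2) × ZMod 2) := E ∪ E.image (· + u) with hB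
    have hBcard : B.card ≤ 2 * r := by
      calc B.card ≤ E.card + (E.image (· + u)).card := Finset.card_union_le _ _
        _ ≤ E.card + E.card := Nat.add_le_add_left Finset.card_image_le _
        _ = 2 * r := by omega
    -- terms agree outside B
    have hterm : ∀ x : (Fin m → ZMod 2) × ZMod 2, x ∉ B →
        ((1 : ℤ) - (-1 : ℤ) ^ ((fr x + fr (x + u)).val)) = 0 := by
      intro x hx
      rw [hB, Finset.mem_union] at hx
      push_neg at hx
      have hx1 : x ∉ E := hx.1
      have hx2 : x + u ∉ E := by
        intro hmem
        exact hx.2 (Finset.mem_image.mpr ⟨x + u, hmem, by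
          show (x + u) + u = x
          rw [add_assoc, huu, add_zero]⟩)
      rw [h_out x hx1, h_out _ hx2, hshift]
      have hzero : f x + f x = 0 := by
        have h2 : (2 : ZMod 2) = 0 := by decide
        rw [← two_mul, h2, zero_mul]
      rw [hzero]
      simp
    have hsum : (2 ^ (m + 1) : ℤ) - acP fr u ≤ 2 * B.card := by
      have h1 : (2 ^ (m + 1) : ℤ) - acP fr u
          = ∑ x : (Fin m → ZMod 2) × ZMod 2,
            ((1 : ℤ) - (-1 : ℤ) ^ ((fr x + fr (x + u)).val)) := by
        rw [Finset.sum_sub_distrib, Finset.sum_const, acP]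
        simp [hcard]
      rw [h1]
      have h2 : ∑ x : (Fin m → ZMod 2) × ZMod 2,
            ((1 : ℤ) - (-1 : ℤ) ^ ((fr x + fr (x + u)).val))
          = ∑ x ∈ B, ((1 : ℤ) - (-1 : ℤ) ^ ((fr x + fr (x + u)).val)) := by
        symm
        apply Finset.sum_subset (Finset.subset_univ B)
        intro x _ hx
        exact hterm x hx
      rw [h2]
      calc ∑ x ∈ B, ((1 : ℤ) - (-1 : ℤ) ^ ((fr x + fr (x + u)).val))
          ≤ ∑ _x ∈ B, (2 : ℤ) := by
            apply Finset.sum_le_sum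
            intro x _
            have := (neg_one_pow_bounds ((fr x + fr (x + u)).val)).1
            linarith
        _ = 2 * B.card := by rw [Finset.sum_const]; ring
    have hac : (2 ^ (m + 1) : ℤ) - 4 * r ≤ acP fr u := by
      have : (B.card : ℤ) ≤ 2 * r := by exact_mod_cast hBcard
      linarith
    have hle : acP fr u ≤ ((acP fr u).natAbs : ℤ) := Int.le_natAbs
    have hsup : (acP fr u).natAbs ≤ absIndP fr := by
      unfold absIndP
      exact Finset.le_sup (f := fun v => (acP fr v).natAbs) (Finset.mem_erase.mpr ⟨hune, Finset.mem_univ u⟩)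
    have : ((acP fr u).natAbs : ℤ) ≤ (absIndP fr : ℤ) := by exact_mod_cast hsup
    linarith
  -- part 2
  have hdist : hammingDist f fr = r := by
    rw [← hE]
    unfold hammingDist
    congr 1
    ext x
    simp only [Finset.mem_filter, Finset.mem_univ, true_and]
    constructor
    · intro hne
      by_contra hx
      exact hne (h_out x hx).symm
    · intro hx
      exact fun hEq => h_in x hx hEq.symm
  have hdist' : hammingDist fr f = r := by rw [hammingDist_comm]; exact hdist
  have h21 : nlP f ≤ nlP fr + r := nlP_diff f fr (le_of_eq hdist)
  have h22 : nlP fr ≤ nlP f + r := nlP_diff fr f (le_of_eq hdist')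
  refine ⟨part1, ?_, ?_⟩
  · have : (nlP f : ℤ) ≤ (nlP fr : ℤ) + r := by exact_mod_cast h21
    linarith
  · exact_mod_cast h22
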